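/- Let D = (n, ι, P) be a finite Markov chain with target set T ⊆ Fin n, and let Z := { s : Pr_{D,s}(◇T) = 0 }. Then the function p(s) := Pr_{D,s}(◇T) is the unique function p : Fin n → ℝ satisfying: p s = 1 for all s ∈ T; p s = 0 for all s ∈ Z; and p s = ∑_{s'} P s s' · p s' for all s ∉ T ∪ Z. -/

import Mathlib

/-!
On `T` the only hitting path is the trivial one; off `T`, splitting off the first step of a
hitting path gives the Bellman equation. Summing in `ℝ≥0∞` avoids summability questions, and
induction on the path length bounds the total mass by `1`, so the real sums are the `toReal`
of finite values.

For uniqueness, the difference `q` of two solutions vanishes on `T ∪ Z` and is harmonic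
elsewhere. If `|q|` has a positive maximum at `s₀`, then `s₀ ∉ Z`, so some hitting path of
nonzero mass leaves `s₀`; harmonicity forces `|q|` to stay maximal along it, up to its last
state, which lies in `T` where `q = 0`.
-/

/-- A finite path in state space `S`: a length `m` together with `m + 1` states. -/
abbrev MCPath (S : Type) : Type := Σ m : ℕ, Fin (m + 1) → S

/-- The mass of a path: the product of the transition probabilities along it. -/
def pathMass {S : Type} (P : S → S → ℝ) (π : MCPath S) : ℝ :=
  ∏ i : Fin π.1, P (π.2 i.castSucc) (π.2 i.succ)

/-- A hitting path from `s` to `T`: it starts in `s`, ends in `T`, and no proper prefix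
visits `T`. -/
def IsHitting {S : Type} (T : Set S) (s : S) (π : MCPath S) : Prop :=
  π.2 0 = s ∧ π.2 (Fin.last π.1) ∈ T ∧ ∀ i : Fin π.1, π.2 i.castSucc ∉ T

/-- The reachability probability `Pr_{P,s}(◇T)`: the sum of the masses of all hitting
paths from `s` to `T`. -/
noncomputable def reachProb {S : Type} (P : S → S → ℝ) (T : Set S) (s : S) : ℝ :=
  ∑' π : {π : MCPath S // IsHitting T s π}, pathMass P π.1

open scoped ENNReal

namespace MCPath

variable {S : Type}

def single (s : S) : MCPath S := ⟨0, fun _ => s⟩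

def cons (s : S) (π : MCPath S) : MCPath S := ⟨π.1 + 1, Fin.cons s π.2⟩

def tail : MCPath S → MCPath S
  | ⟨0, f⟩ => ⟨0, f⟩
  | ⟨m + 1, f⟩ => ⟨m, Fin.tail f⟩

@[simp]
lemma cons_fst (s : S) (π : MCPath S) : (cons s π).1 = π.1 + 1 := rfl

@[simp]
lemma tail_cons (s : S) (π : MCPath S) : tail (cons s π) = π := by
  obtain ⟨m, f⟩ := π
  simp [tail, cons]

lemma cons_tail {π : MCPath S} (hπ : π.1 ≠ 0) : cons (π.2 0) (tail π) = π := by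
  obtain ⟨_ | m, f⟩ := π
  · exact absurd rfl hπ
  · simp [tail, cons]

end MCPath

open MCPath

variable {S : Type} {T : Set S} {s s' : S} {π : MCPath S}

@[simp]
lemma pathMass_single (P : S → S → ℝ) (s : S) : pathMass P (single s) = 1 :=
  Fin.prod_univ_zero _

lemma pathMass_cons (P : S → S → ℝ) (s : S) (π : MCPath S) :
    pathMass P (cons s π) = P s (π.2 0) * pathMass P π := by
  obtain ⟨m, f⟩ := π
  change ∏ i : Fin (m + 1), P ((Fin.cons s f : Fin (m + 2) → S) i.castSucc)
    ((Fin.cons s f : Fin (m + 2) → S) i.succ) = _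
  simp [Fin.prod_univ_succ, pathMass]

lemma pathMass_nonneg {P : S → S → ℝ} (hpos : ∀ s s', 0 ≤ P s s') (π : MCPath S) :
    0 ≤ pathMass P π :=
  Finset.prod_nonneg fun _ _ => hpos _ _

lemma isHitting_single (hs : s ∈ T) : IsHitting T s (single s) :=
  ⟨rfl, hs, fun i => i.elim0⟩

lemma IsHitting.eq_single (h : IsHitting T s π)
    (hs : s ∈ T) : π = single s := by
  obtain ⟨_ | m, f⟩ := π
  · obtain rfl : f 0 = s := h.1
    simp only [single, Sigma.mk.injEq, heq_eq_eq, true_and]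
    exact funext fun i => congrArg f (Fin.fin_one_eq_zero i)
  · exact absurd (h.1 ▸ hs) (h.2.2 0)

lemma IsHitting.length_ne_zero (h : IsHitting T s π)
    (hs : s ∉ T) : π.1 ≠ 0 := by
  rintro h0
  obtain ⟨m, f⟩ := π
  subst h0
  exact hs (h.1 ▸ h.2.1)

lemma isHitting_cons_iff (hs : s ∉ T) :
    IsHitting T s (cons s π) ↔ IsHitting T (π.2 0) π := by
  obtain ⟨m, f⟩ := π
  simp only [IsHitting, cons, Fin.cons_zero, true_and, ← Fin.succ_last, Fin.cons_succ,
    Fin.forall_fin_succ, Fin.castSucc_zero, ← Fin.succ_castSucc, hs, not_false_eq_true]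
  exact and_iff_right rfl

lemma IsHitting.cons (hs : s ∉ T) (h : IsHitting T s' π) : IsHitting T s (MCPath.cons s π) :=
  (isHitting_cons_iff hs).2 (by rwa [h.1])

lemma IsHitting.cons_tail (h : IsHitting T s π)
    (hs : s ∉ T) : MCPath.cons s (MCPath.tail π) = π :=
  h.1 ▸ MCPath.cons_tail (h.length_ne_zero hs)

lemma IsHitting.tail (h : IsHitting T s π)
    (hs : s ∉ T) : IsHitting T (π.tail.2 0) π.tail :=
  (isHitting_cons_iff hs).1 (by rwa [h.cons_tail hs])

def hittingConsEquiv (hs : s ∉ T) :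
    (Σ s' : S, {π : MCPath S // IsHitting T s' π}) ≃ {π : MCPath S // IsHitting T s π} where
  toFun x := ⟨cons s x.2, x.2.2.cons hs⟩
  invFun π := ⟨_, tail π.1, π.2.tail hs⟩
  left_inv x := Sigma.subtype_ext x.2.2.1 (tail_cons _ _)
  right_inv π := Subtype.ext (π.2.cons_tail hs)

lemma tsum_isHitting_eq_tsum_cons (hs : s ∉ T) (w : MCPath S → ℝ≥0∞) :
    ∑' π : {π : MCPath S // IsHitting T s π}, w π =
      ∑' s', ∑' π : {π : MCPath S // IsHitting T s' π}, w (cons s π) := by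
  rw [← (hittingConsEquiv hs).tsum_eq, ENNReal.tsum_sigma']
  rfl

section Bellman

variable {P : S → S → ℝ}

/-- The mass of the hitting paths of length at most `k`, in `ℝ≥0∞` so that no summability is
needed; `k = ⊤` recovers `reachProb`. -/
noncomputable def reachProbWithin (P : S → S → ℝ) (T : Set S) (k : ℕ∞) (s : S) : ℝ≥0∞ :=
  ∑' π : {π : MCPath S // IsHitting T s π},
    if (π.1.1 : ℕ∞) ≤ k then ENNReal.ofReal (pathMass P π) else 0

lemma reachProbWithin_of_mem (hs : s ∈ T) (k : ℕ∞) : reachProbWithin P T k s = 1 := by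
  rw [reachProbWithin, tsum_eq_single ⟨single s, isHitting_single hs⟩]
  · change (if ((0 : ℕ) : ℕ∞) ≤ k then ENNReal.ofReal (pathMass P (single s)) else 0) = 1
    simp
  · exact fun π hπ => absurd (Subtype.ext (π.2.eq_single hs)) hπ

lemma reachProbWithin_zero_of_notMem (hs : s ∉ T) : reachProbWithin P T 0 s = 0 :=
  ENNReal.tsum_eq_zero.2 fun π => if_neg (by simpa using π.2.length_ne_zero hs)

lemma reachProbWithin_add_one (hpos : ∀ s s', 0 ≤ P s s') (hs : s ∉ T) (k : ℕ∞) :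
    reachProbWithin P T (k + 1) s =
      ∑' s', ENNReal.ofReal (P s s') * reachProbWithin P T k s' := by
  rw [reachProbWithin, tsum_isHitting_eq_tsum_cons hs
    fun π => if (π.1 : ℕ∞) ≤ k + 1 then ENNReal.ofReal (pathMass P π) else 0]
  refine tsum_congr fun s' => ?_
  rw [reachProbWithin, ← ENNReal.tsum_mul_left]
  refine tsum_congr fun π => ?_
  simp only [cons_fst, Nat.cast_add, Nat.cast_one, ENat.add_le_add_iff_right ENat.one_ne_top,
    pathMass_cons, π.2.1, ENNReal.ofReal_mul (hpos s s'), mul_ite_zero]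

lemma reachProbWithin_natCast_le_one [Fintype S] (hpos : ∀ s s', 0 ≤ P s s')
    (hrow : ∀ s, ∑ s', P s s' = 1) (k : ℕ) (s : S) : reachProbWithin P T k s ≤ 1 := by
  induction k generalizing s with
  | zero =>
    by_cases hs : s ∈ T
    · exact (reachProbWithin_of_mem hs _).le
    · simp [reachProbWithin_zero_of_notMem hs]
  | succ k ih =>
    by_cases hs : s ∈ T
    · exact (reachProbWithin_of_mem hs _).le
    calc reachProbWithin P T (k + 1 : ℕ) s
        = ∑ s', ENNReal.ofReal (P s s') * reachProbWithin P T k s' := by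
          rw [Nat.cast_succ, reachProbWithin_add_one hpos hs, tsum_fintype]
      _ ≤ ∑ s', ENNReal.ofReal (P s s') := by
          gcongr with s'
          exact mul_le_of_le_one_right' (ih s')
      _ = 1 := by
          rw [← ENNReal.ofReal_sum_of_nonneg fun s' _ => hpos s s', hrow, ENNReal.ofReal_one]

lemma reachProbWithin_top_le_one [Fintype S] (hpos : ∀ s s', 0 ≤ P s s')
    (hrow : ∀ s, ∑ s', P s s' = 1) (s : S) : reachProbWithin P T ⊤ s ≤ 1 := by
  rw [reachProbWithin, ENNReal.tsum_eq_iSup_sum]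
  refine iSup_le fun F => ?_
  let k := F.sup fun π => π.1.1
  refine (Finset.sum_le_sum fun π hπ => ?_).trans
    ((ENNReal.sum_le_tsum F).trans (reachProbWithin_natCast_le_one hpos hrow k s))
  rw [if_pos le_top, if_pos (Nat.cast_le.2 (Finset.le_sup (f := fun π => π.1.1) hπ))]

lemma reachProb_eq_toReal (hpos : ∀ s s', 0 ≤ P s s') (s : S) :
    reachProb P T s = (reachProbWithin P T ⊤ s).toReal := by
  simp only [reachProb, reachProbWithin, le_top, if_true]
  rw [ENNReal.tsum_toReal_eq fun _ => ENNReal.ofReal_ne_top]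
  exact tsum_congr fun π => (ENNReal.toReal_ofReal (pathMass_nonneg hpos π)).symm

lemma reachProb_of_mem (hpos : ∀ s s', 0 ≤ P s s') (hs : s ∈ T) :
    reachProb P T s = 1 := by
  rw [reachProb_eq_toReal hpos, reachProbWithin_of_mem hs, ENNReal.toReal_one]

lemma reachProb_eq_sum [Fintype S] (hpos : ∀ s s', 0 ≤ P s s')
    (hrow : ∀ s, ∑ s', P s s' = 1) (hs : s ∉ T) :
    reachProb P T s = ∑ s', P s s' * reachProb P T s' := by
  have hfin s' : reachProbWithin P T ⊤ s' ≠ ⊤ :=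
    ((reachProbWithin_top_le_one hpos hrow s').trans_lt ENNReal.one_lt_top).ne
  rw [reachProb_eq_toReal hpos, ← top_add 1, reachProbWithin_add_one hpos hs,
    tsum_fintype,
    ENNReal.toReal_sum fun s' _ => ENNReal.mul_ne_top ENNReal.ofReal_ne_top (hfin s')]
  simp only [ENNReal.toReal_mul, ENNReal.toReal_ofReal (hpos s _), reachProb_eq_toReal hpos]

end Bellman

section MaximumPrinciple

variable {P : S → S → ℝ}

lemma exists_isHitting_pathMass_ne_zero (h : reachProb P T s ≠ 0) :
    ∃ π, IsHitting T s π ∧ pathMass P π ≠ 0 := by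
  by_contra! hzero
  refine h ((tsum_congr fun π => ?_).trans tsum_zero)
  exact hzero π.1 π.2

lemma last_mem_of_pathMass_ne_zero {A : Set S} (hA : ∀ s ∈ A, ∀ s', P s s' ≠ 0 → s' ∈ A)
    (hπ : pathMass P π ≠ 0) (h0 : π.2 0 ∈ A) : π.2 (Fin.last π.1) ∈ A :=
  Fin.induction (motive := fun i => π.2 i ∈ A) h0
    (fun i hi => hA _ hi _ (Finset.prod_ne_zero_iff.1 hπ i (Finset.mem_univ i))) _

lemma abs_eq_of_forall_abs_le_of_eq_sum [Fintype S] (hpos : ∀ s s', 0 ≤ P s s')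
    (hrow : ∀ s, ∑ s', P s s' = 1) {q : S → ℝ} {t : S} (hmax : ∀ s', |q s'| ≤ |q s|)
    (hq : q s = ∑ s', P s s' * q s') (ht : P s t ≠ 0) : |q t| = |q s| := by
  have hslack : ∑ s', P s s' * (|q s| - |q s'|) ≤ 0 := calc
    ∑ s', P s s' * (|q s| - |q s'|) = |q s| - ∑ s', P s s' * |q s'| := by
      simp only [mul_sub, Finset.sum_sub_distrib, ← Finset.sum_mul, hrow, one_mul]
    _ ≤ 0 := by
      rw [sub_nonpos, hq]
      refine (Finset.abs_sum_le_sum_abs _ _).trans_eq (Finset.sum_congr rfl fun s' _ => ?_)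
      rw [abs_mul, abs_of_nonneg (hpos s s')]
  have hnonneg : ∀ s' ∈ Finset.univ, 0 ≤ P s s' * (|q s| - |q s'|) := fun s' _ =>
    mul_nonneg (hpos s s') (sub_nonneg.2 (hmax s'))
  have hterm := (Finset.sum_eq_zero_iff_of_nonneg hnonneg).1
    (le_antisymm hslack (Finset.sum_nonneg hnonneg)) t (Finset.mem_univ t)
  linarith [(mul_eq_zero.1 hterm).resolve_left ht]

/-- Maximum principle: the states where `|q|` is maximal form a set closed under steps of
nonzero probability, which therefore meets `B` unless `q = 0`. -/
lemma eq_zero_of_eq_sum_of_reach [Fintype S] (hpos : ∀ s s', 0 ≤ P s s')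
    (hrow : ∀ s, ∑ s', P s s' = 1) {B : Set S} {q : S → ℝ} (hB : ∀ s ∈ B, q s = 0)
    (hq : ∀ s ∉ B, q s = ∑ s', P s s' * q s')
    (hreach : ∀ s ∉ B, ∃ π, π.2 0 = s ∧ π.2 (Fin.last π.1) ∈ B ∧ pathMass P π ≠ 0) :
    q = 0 := by
  funext s
  by_contra hs
  have : Nonempty S := ⟨s⟩
  obtain ⟨s₀, hmax⟩ := Finite.exists_max fun s => |q s|
  have hs₀ : 0 < |q s₀| := (abs_pos.2 hs).trans_le (hmax s)
  let A := {t | |q t| = |q s₀|}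
  have hAB : ∀ t ∈ A, t ∉ B := fun t ht htB => by
    simp only [A, Set.mem_ofPred_eq, hB t htB, abs_zero] at ht
    exact hs₀.ne ht
  have hA : ∀ t ∈ A, ∀ t', P t t' ≠ 0 → t' ∈ A := fun t ht t' htt' =>
    (abs_eq_of_forall_abs_le_of_eq_sum hpos hrow (fun s' => ht ▸ hmax s') (hq t (hAB t ht))
      htt').trans ht
  obtain ⟨π, h0, hlast, hπ⟩ := hreach s₀ (hAB s₀ rfl)
  exact hAB _ (last_mem_of_pathMass_ne_zero hA hπ (h0 ▸ rfl)) hlast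

end MaximumPrinciple

theorem reachProb_unique_bellman_general {n : ℕ} (P : Fin n → Fin n → ℝ)
    (hpos : ∀ s s', 0 ≤ P s s') (hrow : ∀ s, ∑ s', P s s' = 1)
    (T : Set (Fin n)) (p : Fin n → ℝ) :
    ((∀ s ∈ T, p s = 1) ∧
     (∀ s ∈ {s | reachProb P T s = 0}, p s = 0) ∧
     (∀ s, s ∉ T ∪ {s | reachProb P T s = 0} → p s = ∑ s', P s s' * p s'))
    ↔ p = fun s => reachProb P T s := by
  have hT s (hs : s ∈ T) : reachProb P T s = 1 := reachProb_of_mem hpos hs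
  have hbellman s (hs : s ∉ T) := reachProb_eq_sum hpos hrow hs
  constructor
  · rintro ⟨hp₁, hp₀, hpb⟩
    rw [← sub_eq_zero]
    refine eq_zero_of_eq_sum_of_reach hpos hrow (B := T ∪ {s | reachProb P T s = 0}) ?_ ?_ ?_
    · rintro s (hs | hs)
      · simp [hp₁ s hs, hT s hs]
      · simp [hp₀ s hs, hs.out]
    · intro s hs
      simp only [Pi.sub_apply, mul_sub, Finset.sum_sub_distrib]
      rw [← hpb s hs, ← hbellman s fun h => hs (Or.inl h)]
    · intro s hs
      obtain ⟨π, hπ, hmass⟩ := exists_isHitting_pathMass_ne_zero fun h => hs (Or.inr h)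
      exact ⟨π, hπ.1, Or.inl hπ.2.1, hmass⟩
  · rintro rfl
    exact ⟨hT, fun s hs => hs, fun s hs => hbellman s fun h => hs (Or.inl h)⟩

/-- Bellman characterization: for a finite Markov chain `(n, ι, P)` with target set `T`,
letting `Z = {s | Pr_{P,s}(◇T) = 0}`, the function `s ↦ Pr_{P,s}(◇T)` is the unique function
`p : Fin n → ℝ` with `p s = 1` on `T`, `p s = 0` on `Z`, and
`p s = ∑ s', P s s' * p s'` for `s ∉ T ∪ Z`. -/
theorem reachProb_unique_bellman {n : ℕ} (ι : Fin n) (P : Fin n → Fin n → ℝ)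
    (hpos : ∀ s s', 0 ≤ P s s') (hrow : ∀ s, ∑ s', P s s' = 1)
    (T : Set (Fin n)) (p : Fin n → ℝ) :
    ((∀ s ∈ T, p s = 1) ∧
     (∀ s ∈ {s | reachProb P T s = 0}, p s = 0) ∧
     (∀ s, s ∉ T ∪ {s | reachProb P T s = 0} → p s = ∑ s', P s s' * p s'))
    ↔ p = fun s => reachProb P T s :=
  reachProb_unique_bellman_general P hpos hrow T p
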